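/- Let f(w) = g(w) + λ‖w‖₁ with g convex differentiable, and let δ ≠ 0 satisfy q(δ) = ∇g(w)ᵀδ + (1/2)δᵀHδ + λ‖w+δ‖₁ − λ‖w‖₁ < 0 for a symmetric positive definite H. Then δ is a descent direction for f at w: there exists t̄ > 0 such that f(w + tδ) < f(w) for all t ∈ (0, t̄]. -/

import Mathlib

/-!
Dropping the nonnegative term `δᵀHδ / 2` from `q(δ) < 0` leaves
`∇g(w)ᵀδ + λ‖w + δ‖₁ - λ‖w‖₁ < 0`. Along the ray `t ↦ w + tδ`, the smooth part `g` has slope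
`∇g(w)ᵀδ` at `t = 0`, while by convexity the `ℓ₁` term lies below its chord on `[0, 1]`, whose
slope is `λ‖w + δ‖₁ - λ‖w‖₁`. Hence for small `t > 0` the sum decreases.
-/

open Matrix Set Filter Topology

theorem ConvexOn.le_add_smul_sub {E : Type*} [AddCommGroup E] [Module ℝ E] {F : E → ℝ}
    (hF : ConvexOn ℝ univ F) (w δ : E) {t : ℝ} (ht₀ : 0 ≤ t) (ht₁ : t ≤ 1) :
    F (w + t • δ) ≤ F w + t * (F (w + δ) - F w) := by
  have hseg : (1 - t) • w + t • (w + δ) = w + t • δ := by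
    rw [smul_add, ← add_assoc, ← add_smul, sub_add_cancel, one_smul]
  have := hF.2 (mem_univ w) (mem_univ (w + δ)) (sub_nonneg.2 ht₁) ht₀ (sub_add_cancel 1 t)
  rw [hseg, smul_eq_mul, smul_eq_mul] at this
  linarith

theorem eventually_add_lt_of_fderiv_add_sub_neg {E : Type*} [NormedAddCommGroup E]
    [NormedSpace ℝ E] {g F : E → ℝ} {w δ : E} (hg : DifferentiableAt ℝ g w)
    (hF : ConvexOn ℝ univ F) (h : fderiv ℝ g w δ + (F (w + δ) - F w) < 0) :
    ∀ᶠ t in 𝓝[>] (0 : ℝ), g (w + t • δ) + F (w + t • δ) < g w + F w := by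
  have hpath : HasDerivAt (fun t : ℝ => w + t • δ) δ 0 := by
    simpa using ((hasDerivAt_id (0 : ℝ)).smul_const δ).const_add w
  have hline : HasDerivAt (fun t : ℝ => g (w + t • δ)) (fderiv ℝ g w δ) 0 :=
    hg.hasFDerivAt.comp_hasDerivAt_of_eq 0 hpath (by simp)
  have hslope : ∀ᶠ t in 𝓝[>] (0 : ℝ),
      slope (fun t : ℝ => g (w + t • δ)) 0 t < -(F (w + δ) - F w) :=
    hline.hasDerivWithinAt.limsup_slope_le' (lt_irrefl (0 : ℝ)) (by linarith)
  filter_upwards [hslope, Ioc_mem_nhdsGT zero_lt_one] with t hs ⟨ht₀, ht₁⟩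
  rw [slope_def_field, sub_zero, zero_smul, add_zero, div_lt_iff₀ ht₀] at hs
  nlinarith [hF.le_add_smul_sub w δ ht₀.le ht₁]

theorem convexOn_sum_abs (ι : Type*) [Fintype ι] :
    ConvexOn ℝ univ (fun v : ι → ℝ => ∑ j, |v j|) := by
  refine ⟨convex_univ, fun x _ y _ a b ha hb _ => ?_⟩
  simp only [Pi.add_apply, Pi.smul_apply, smul_eq_mul, Finset.mul_sum, ← Finset.sum_add_distrib]
  gcongr with j
  calc |a * x j + b * y j| ≤ |a * x j| + |b * y j| := abs_add_le _ _
    _ = a * |x j| + b * |y j| := by rw [abs_mul, abs_mul, abs_of_nonneg ha, abs_of_nonneg hb]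

theorem stmt_19_general (d : ℕ) (g : (Fin d → ℝ) → ℝ) (lam : ℝ) (hlam : 0 ≤ lam)
    (hgdiff : Differentiable ℝ g)
    (f : (Fin d → ℝ) → ℝ) (hf : ∀ v, f v = g v + lam * ∑ j, |v j|)
    (H : Matrix (Fin d) (Fin d) ℝ) (hH : H.PosDef)
    (w δ : Fin d → ℝ)
    (hq : fderiv ℝ g w δ + (1 / 2) * (δ ⬝ᵥ (H *ᵥ δ))
        + lam * ∑ j, |w j + δ j| - lam * ∑ j, |w j| < 0) :
    ∃ tbar > 0, ∀ t ∈ Set.Ioc (0 : ℝ) tbar, f (w + t • δ) < f w := by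
  obtain rfl : f = fun v => g v + lam * ∑ j, |v j| := funext hf
  have hquad : 0 ≤ δ ⬝ᵥ (H *ᵥ δ) := by simpa using hH.posSemidef.dotProduct_mulVec_nonneg δ
  have hdir : fderiv ℝ g w δ
      + (lam * ∑ j, |(w + δ) j| - lam * ∑ j, |w j|) < 0 := by
    simp only [Pi.add_apply]
    linarith
  obtain ⟨tbar, htbar, hsub⟩ := mem_nhdsGT_iff_exists_Ioc_subset.mp <|
    eventually_add_lt_of_fderiv_add_sub_neg (hgdiff w) ((convexOn_sum_abs (Fin d)).smul hlam) hdir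
  exact ⟨tbar, htbar, fun t ht => hsub ht⟩

theorem stmt_19 (d : ℕ) (g : (Fin d → ℝ) → ℝ) (lam : ℝ) (hlam : 0 ≤ lam)
    (hgconv : ConvexOn ℝ Set.univ g) (hgdiff : Differentiable ℝ g)
    (f : (Fin d → ℝ) → ℝ) (hf : ∀ v, f v = g v + lam * ∑ j, |v j|)
    (H : Matrix (Fin d) (Fin d) ℝ) (hH : H.PosDef)
    (w δ : Fin d → ℝ) (hδ : δ ≠ 0)
    (hq : fderiv ℝ g w δ + (1 / 2) * (δ ⬝ᵥ (H *ᵥ δ))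
        + lam * ∑ j, |w j + δ j| - lam * ∑ j, |w j| < 0) :
    ∃ tbar > 0, ∀ t ∈ Set.Ioc (0 : ℝ) tbar, f (w + t • δ) < f w :=
  stmt_19_general d g lam hlam hgdiff f hf H hH w δ hq
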